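/- If $p_0 = a$ and $p_{d+1} = a + b p_d + c p_d^2$ with $a, b, c \geq 0$, $a + b + c = 1$, and $a > c$, then $p_d \to 1$ as $d \to \infty$. -/
import Mathlib


theorem stmt_3 (a b c : ℝ) (ha : 0 ≤ a) (hb : 0 ≤ b) (hc : 0 ≤ c)
    (hsum : a + b + c = 1) (hac : a > c)
    (p : ℕ → ℝ) (h0 : p 0 = a)
    (hrec : ∀ d, p (d + 1) = a + b * p d + c * (p d) ^ 2) :
    Filter.Tendsto p Filter.atTop (nhds 1) := by
  set r : ℝ := b + 2 * c with hr
  have hr0 : 0 ≤ r := by positivity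
  have hr1 : r < 1 := by nlinarith
  have key : ∀ d, 0 ≤ p d ∧ p d ≤ 1 ∧ 1 - p d ≤ r ^ d * (1 - a) := by
    intro d
    induction d with
    | zero =>
      refine ⟨by rw [h0]; exact ha, by rw [h0]; nlinarith, by rw [h0]; simp⟩
    | succ n ih =>
      obtain ⟨h1, h2, h3⟩ := ih
      have heq : 1 - p (n + 1) = (1 - p n) * (b + c * (1 + p n)) := by
        rw [hrec]; nlinarith
      have hbc : 0 ≤ b + c * (1 + p n) := by positivity
      have hle : b + c * (1 + p n) ≤ r := by nlinarith
      refine ⟨?_, ?_, ?_⟩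
      · rw [hrec]; nlinarith
      · nlinarith
      · have : (1 - p n) * (b + c * (1 + p n)) ≤ (r ^ n * (1 - a)) * r := by
          apply mul_le_mul h3 hle hbc (mul_nonneg (pow_nonneg hr0 n) (by linarith))
        rw [heq]; calc (1 - p n) * (b + c * (1 + p n)) ≤ (r ^ n * (1 - a)) * r := this
          _ = r ^ (n + 1) * (1 - a) := by ring
  have hlim : Filter.Tendsto (fun d => 1 - r ^ d * (1 - a)) Filter.atTop (nhds 1) := by
    have := tendsto_pow_atTop_nhds_zero_of_lt_one hr0 hr1
    have h2 := (this.mul_const (1 - a)).const_sub 1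
    simpa using h2
  apply tendsto_of_tendsto_of_tendsto_of_le_of_le hlim tendsto_const_nhds
  · intro d; have := (key d).2.2; simp only []; linarith
  · intro d; exact (key d).2.1
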